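/- The polynomial C = t² + 1 + ε𝐢 ∈ 𝔻ℍ[t] satisfies, for all real numbers a, b, the identity C = (t + 𝐢 + ε(a𝐣 + b𝐤 − 1/2))·(t − 𝐢 − ε(a𝐣 + b𝐤 − 1/2)); however, there are no h₁, h₂ ∈ 𝔻ℍ with C = (t − h₁)(t − h₂) such that both linear factors are motion polynomials, i.e. such that ν(t − h₁) and ν(t − h₂) both have all coefficients in ℝ·1. -/

import Mathlib

/-! Comparing coefficients, `X² + c = (X - u)(X - v)` holds iff `v = -u` and `u² = -c`; this gives
the stated family of factorizations. In a factorization into linear motion polynomials write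
`h₁ = p + εq`. Then `p² = -1` forces `p` to be a pure quaternion, and reality of the norm
polynomial of `X - h₁` says that `q` is pure and `p q̄ + q p̄ = 0`, i.e. `p q + q p = 0`. But the dual
part of `h₁² = -1 - ε𝐢` is `p q + q p = -𝐢`. -/

open Polynomial DualNumber

/-- The dual quaternions `ℍ ⊕ εℍ` with `ε` central and `ε² = 0`. -/
abbrev DH : Type := DualNumber (Quaternion ℝ)

/-- Quaternion unit `𝐢`. -/
def qi : Quaternion ℝ := ⟨0, 1, 0, 0⟩
/-- Quaternion unit `𝐣`. -/
def qj : Quaternion ℝ := ⟨0, 0, 1, 0⟩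
/-- Quaternion unit `𝐤`. -/
def qk : Quaternion ℝ := ⟨0, 0, 0, 1⟩

/-- The dual quaternion with primal part `a` and dual part `b`, i.e. `a + εb`. -/
def dq (a b : Quaternion ℝ) : DH := (a, b)

/-- Conjugation of a dual quaternion: quaternion conjugation in both components. -/
def dconj (x : DH) : DH := (star x.fst, star x.snd)

/-- Coefficientwise conjugation of a left polynomial over the dual quaternions. -/
noncomputable def dpconj (p : Polynomial DH) : Polynomial DH :=
  ⟨AddMonoidAlgebra.ofCoeff (Finsupp.mapRange dconj (by simp [dconj] <;> rfl) p.toFinsupp.coeff)⟩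


open scoped Quaternion

namespace Polynomial

variable {R : Type*} [Ring R]

theorem X_sub_C_mul_X_sub_C (u v : R) :
    (X - C u) * (X - C v) = X ^ 2 - C (u + v) * X + C (u * v) := by
  simp only [sub_mul, mul_sub, X_mul, ← C_mul, C_add, add_mul, sq]
  abel

theorem X_sq_add_C_eq_X_sub_C_mul_X_sub_C_iff (c u v : R) :
    X ^ 2 + C c = (X - C u) * (X - C v) ↔ v = -u ∧ u * u = -c := by
  rw [X_sub_C_mul_X_sub_C]
  constructor
  · intro h
    have h₁ : (0 : R) = -v + -u := by simpa using congrArg (coeff · 1) h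
    have h₀ : c = u * v := by simpa using congrArg (coeff · 0) h
    obtain rfl : v = -u := by grind
    exact ⟨rfl, by rw [h₀, mul_neg, neg_neg]⟩
  · rintro ⟨rfl, h⟩
    simp [h]

end Polynomial

namespace Quaternion

theorem star_eq_neg_of_mul_self_eq_neg_one {p : ℍ[ℝ]} (hp : p * p = -1) : star p = -p := by
  refine star_eq_neg.2 ?_
  have h := congrArg (fun x => (x.re, x.imI, x.imJ, x.imK)) hp
  simp only [re_mul, imI_mul, imJ_mul, imK_mul, re_neg, imI_neg, imJ_neg, imK_neg, re_one,
    imI_one, imJ_one, imK_one, Prod.mk.injEq] at h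
  obtain ⟨h₁, h₂, h₃, h₄⟩ := h
  have key : p.re * (p.re ^ 2 + 1) = 0 := by
    linear_combination p.re * h₁ + (p.imI / 2) * h₂ + (p.imJ / 2) * h₃ + (p.imK / 2) * h₄
  exact (mul_eq_zero.1 key).resolve_right (by positivity)

theorem mul_add_mul_eq_zero_of_mul_self_eq_neg_one {p q : ℍ[ℝ]} (hp : p * p = -1)
    (hq : star q = -q) (h : p * star q + q * star p = 0) : p * q + q * p = 0 := by
  rw [hq, star_eq_neg_of_mul_self_eq_neg_one hp, mul_neg, mul_neg, ← neg_add] at h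
  exact neg_eq_zero.1 h

end Quaternion

@[simp] lemma qi_re : qi.re = 0 := rfl
@[simp] lemma qi_imI : qi.imI = 1 := rfl
@[simp] lemma qi_imJ : qi.imJ = 0 := rfl
@[simp] lemma qi_imK : qi.imK = 0 := rfl
@[simp] lemma qj_re : qj.re = 0 := rfl
@[simp] lemma qj_imI : qj.imI = 0 := rfl
@[simp] lemma qj_imJ : qj.imJ = 1 := rfl
@[simp] lemma qk_re : qk.re = 0 := rfl
@[simp] lemma qk_imI : qk.imI = 0 := rfl
@[simp] lemma qk_imK : qk.imK = 1 := rfl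

lemma qi_ne_zero : qi ≠ 0 := fun h => by simpa using congrArg QuaternionAlgebra.imI h

lemma qi_mul_qi : qi * qi = -1 := by
  ext <;> simp

lemma qi_mul_add_mul_qi (a b c : ℝ) :
    qi * (a • qj + b • qk - c) + (a • qj + b • qk - c) * qi = (-2 * c) • qi := by
  ext <;> simp [two_mul]

@[simp] lemma dq_fst (a b : ℍ[ℝ]) : (dq a b).fst = a := rfl
@[simp] lemma dq_snd (a b : ℍ[ℝ]) : (dq a b).snd = b := rfl

lemma dq_neg (a b : ℍ[ℝ]) : dq (-a) (-b) = -dq a b := rfl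

lemma dq_mul_self (a b : ℍ[ℝ]) : dq a b * dq a b = dq (a * a) (a * b + b * a) := by
  ext <;> simp

@[simp] lemma dconj_fst (x : DH) : (dconj x).fst = star x.fst := rfl
@[simp] lemma dconj_snd (x : DH) : (dconj x).snd = star x.snd := rfl

@[simp] lemma dconj_zero : dconj 0 = 0 := TrivSqZeroExt.ext (star_zero _) (star_zero _)
@[simp] lemma dconj_one : dconj 1 = 1 := TrivSqZeroExt.ext (star_one _) (star_zero _)
@[simp] lemma dconj_neg (x : DH) : dconj (-x) = -dconj x :=
  TrivSqZeroExt.ext (star_neg _) (star_neg _)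

lemma dpconj_coeff (p : DH[X]) (n : ℕ) : (dpconj p).coeff n = dconj (p.coeff n) := by
  rcases p with ⟨p⟩
  simp [dpconj, coeff]

lemma dpconj_X_sub_C (h : DH) : dpconj (X - C h) = X - C (dconj h) := by
  ext n : 1
  rw [dpconj_coeff]
  rcases n with _ | _ | n <;> simp [coeff_X, coeff_C]

/-- Reality of `ν(X - h) = X² - (h + h̄) X + h h̄` kills the dual parts of `h + h̄` and `h h̄`. -/
lemma star_snd_of_motion_X_sub_C {h : DH}
    (hν : ∀ j : ℕ, ∃ r : ℝ, ((X - C h) * dpconj (X - C h)).coeff j = algebraMap ℝ DH r) :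
    star h.snd = -h.snd ∧ h.fst * star h.snd + h.snd * star h.fst = 0 := by
  have hdual (j : ℕ) : (((X - C h) * (X - C (dconj h))).coeff j).snd = 0 := by
    obtain ⟨r, hr⟩ := hν j
    rw [← dpconj_X_sub_C, hr, TrivSqZeroExt.algebraMap_eq_inl', TrivSqZeroExt.snd_inl]
  have h₁ : -star h.snd + -h.snd = 0 := by simpa [X_sub_C_mul_X_sub_C] using hdual 1
  have h₀ : h.fst * star h.snd + h.snd * star h.fst = 0 := by
    simpa [X_sub_C_mul_X_sub_C] using hdual 0
  exact ⟨eq_neg_of_add_eq_zero_left (neg_eq_zero.1 (by rwa [neg_add])), h₀⟩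

/-- The polynomial `F = t² + 1 + ε𝐢` satisfies, for all real `a`, `b`,
`F = (t + 𝐢 + ε(a𝐣 + b𝐤 - 1/2)) · (t - 𝐢 - ε(a𝐣 + b𝐤 - 1/2))`, but it has no
factorization into two linear factors that are both motion polynomials. -/
theorem factorizations_but_no_motion_factorization :
    (∀ a b : ℝ,
      (X ^ 2 + 1 + Polynomial.C (dq 0 qi) : Polynomial DH) =
        (X - Polynomial.C (dq (-qi) (-(a • qj + b • qk - (1 / 2 : Quaternion ℝ))))) *
          (X - Polynomial.C (dq qi (a • qj + b • qk - (1 / 2 : Quaternion ℝ))))) ∧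
    ¬ ∃ h₁ h₂ : DH,
      (X ^ 2 + 1 + Polynomial.C (dq 0 qi) : Polynomial DH) =
          (X - Polynomial.C h₁) * (X - Polynomial.C h₂) ∧
        (∀ j : ℕ, ∃ r : ℝ,
          ((X - Polynomial.C h₁) * dpconj (X - Polynomial.C h₁)).coeff j
            = algebraMap ℝ DH r) ∧
        (∀ j : ℕ, ∃ r : ℝ,
          ((X - Polynomial.C h₂) * dpconj (X - Polynomial.C h₂)).coeff j
            = algebraMap ℝ DH r) := by
  simp only [add_assoc, ← C_1, ← C_add, X_sq_add_C_eq_X_sub_C_mul_X_sub_C_iff]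
  refine ⟨fun a b => ⟨by rw [dq_neg, neg_neg], ?_⟩, ?_⟩
  · have half : (1 / 2 : ℍ[ℝ]) = ((1 / 2 : ℝ) : ℍ[ℝ]) := by push_cast; rfl
    rw [dq_neg, neg_mul_neg, dq_mul_self, qi_mul_qi, half, qi_mul_add_mul_qi]
    ext <;> simp
  · rintro ⟨h₁, _, ⟨-, hsq⟩, hν₁, -⟩
    obtain ⟨hq, hν⟩ := star_snd_of_motion_X_sub_C hν₁
    have hfst : h₁.fst * h₁.fst = -1 := by simpa using congrArg TrivSqZeroExt.fst hsq
    have hsnd : h₁.fst * h₁.snd + h₁.snd * h₁.fst = -qi := by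
      simpa using congrArg TrivSqZeroExt.snd hsq
    rw [Quaternion.mul_add_mul_eq_zero_of_mul_self_eq_neg_one hfst hq hν, eq_comm,
      neg_eq_zero] at hsnd
    exact qi_ne_zero hsnd
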